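/- Let G = (V,E,w) be a finite connected weighted simple graph with at least 2 vertices and positive edge weights, possessing a spanning tree of total weight L, and let r > 0. If N ⊆ V satisfies d_G(u,v) > r for all distinct u,v ∈ N, then |N| ≤ ⌈2L/r⌉. -/

import Mathlib

/-- The total weight of a walk: the sum of the weights of its edges
(with multiplicity). -/
noncomputable def walkWeight {V : Type*} {G : SimpleGraph V} (w : Sym2 V → ℝ)
    {u v : V} (p : G.Walk u v) : ℝ :=
  (p.edges.map w).sum

/-- The shortest-path distance in a weighted graph: the infimum of the weights
of walks between the two vertices. -/
noncomputable def gdist {V : Type*} (G : SimpleGraph V) (w : Sym2 V → ℝ) (u v : V) : ℝ :=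
  sInf {x : ℝ | ∃ p : G.Walk u v, walkWeight w p = x}

/-- The total weight of a (sub)graph: the sum of the weights of its edges. -/
noncomputable def graphWeight {V : Type*} [Fintype V] (G : SimpleGraph V)
    (w : Sym2 V → ℝ) : ℝ :=
  ∑ e ∈ G.edgeSet.toFinite.toFinset, w e

/-- `T` is a minimum spanning tree of `G` w.r.t. the weights `w`. -/
def IsMST {V : Type*} [Fintype V] (G T : SimpleGraph V) (w : Sym2 V → ℝ) : Prop :=
  T ≤ G ∧ T.IsTree ∧
    ∀ T' : SimpleGraph V, T' ≤ G → T'.IsTree → graphWeight T w ≤ graphWeight T' w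

section aux

variable {V : Type*}

section basic
variable {G : SimpleGraph V} {w : Sym2 V → ℝ}

lemma walkWeight_nonneg (hw : ∀ e ∈ G.edgeSet, 0 ≤ w e) {u v : V} (p : G.Walk u v) :
    0 ≤ walkWeight w p := by
  apply List.sum_nonneg
  intro x hx
  simp only [List.mem_map] at hx
  obtain ⟨e, he, rfl⟩ := hx
  exact hw e (p.edges_subset_edgeSet he)

lemma walkWeight_append {u v x : V} (p : G.Walk u x) (q : G.Walk x v) :
    walkWeight w (p.append q) = walkWeight w p + walkWeight w q := by
  simp [walkWeight, SimpleGraph.Walk.edges_append]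

lemma gdist_le (hw : ∀ e ∈ G.edgeSet, 0 ≤ w e) {u v : V} (p : G.Walk u v) :
    gdist G w u v ≤ walkWeight w p := by
  apply csInf_le
  · exact ⟨0, fun x ⟨q, hq⟩ => hq ▸ walkWeight_nonneg hw q⟩
  · exact ⟨p, rfl⟩

lemma gdist_nonneg' (u v : V) (hw : ∀ e ∈ G.edgeSet, 0 ≤ w e) : 0 ≤ gdist G w u v := by
  apply Real.sInf_nonneg
  rintro x ⟨q, rfl⟩
  exact walkWeight_nonneg hw q

lemma gdist_self (hw : ∀ e ∈ G.edgeSet, 0 ≤ w e) (u : V) : gdist G w u u = 0 := by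
  refine le_antisymm ?_ (gdist_nonneg' u u hw)
  simpa [walkWeight] using gdist_le hw (SimpleGraph.Walk.nil : G.Walk u u)

lemma gdist_triangle (hconn : G.Connected) (hw : ∀ e ∈ G.edgeSet, 0 ≤ w e) (u x v : V) :
    gdist G w u v ≤ gdist G w u x + gdist G w x v := by
  obtain ⟨p⟩ := hconn u x
  obtain ⟨q⟩ := hconn x v
  have hA : {y : ℝ | ∃ p : G.Walk u x, walkWeight w p = y}.Nonempty := ⟨_, p, rfl⟩
  have hB : {y : ℝ | ∃ p : G.Walk x v, walkWeight w p = y}.Nonempty := ⟨_, q, rfl⟩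
  have key : ∀ a ∈ {y : ℝ | ∃ p : G.Walk u x, walkWeight w p = y},
      ∀ b ∈ {y : ℝ | ∃ p : G.Walk x v, walkWeight w p = y}, gdist G w u v ≤ a + b := by
    rintro a ⟨p, rfl⟩ b ⟨q, rfl⟩
    rw [← walkWeight_append]
    exact gdist_le hw _
  have h1 : ∀ a ∈ {y : ℝ | ∃ p : G.Walk u x, walkWeight w p = y},
      gdist G w u v - a ≤ gdist G w x v := by
    intro a ha
    exact le_csInf hB fun b hb => by linarith [key a ha b hb]
  have h2 : gdist G w u v - gdist G w x v ≤ gdist G w u x :=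
    le_csInf hA fun a ha => by linarith [h1 a ha]
  linarith

end basic

/-- The last element of `a :: l`. -/
def lastV (a : V) : List V → V
  | [] => a
  | b :: l => lastV b l

/-- The sum of consecutive `gdist`s along `a :: l`. -/
noncomputable def csum (G : SimpleGraph V) (w : Sym2 V → ℝ) (a : V) : List V → ℝ
  | [] => 0
  | b :: l => gdist G w a b + csum G w b l

lemma lastV_mem (a : V) (l : List V) (hl : l ≠ []) : lastV a l ∈ l := by
  induction l generalizing a with
  | nil => exact absurd rfl hl
  | cons b l ih =>
    cases l with
    | nil => simp [lastV]
    | cons c l' => simpa [lastV] using Or.inr (ih b (by simp))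

section chain

variable {G : SimpleGraph V} {w : Sym2 V → ℝ}

/-- Lemma B: chain bound along a sublist of a walk's support. -/
lemma chain_le_walkWeight (hconn : G.Connected) (hw : ∀ e ∈ G.edgeSet, 0 ≤ w e) :
    ∀ {u v : V} (p : G.Walk u v) (a : V) (l : List V), List.Sublist (a :: l) p.support →
    gdist G w u a + csum G w a l + gdist G w (lastV a l) v ≤ walkWeight w p := by
  intro u v p
  induction p with
  | nil =>
    intro a l hsub
    rw [SimpleGraph.Walk.support_nil] at hsub
    cases hsub with
    | cons _ h => exact absurd h (by simp)
    | cons_cons _ h =>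
      rw [List.sublist_nil] at h
      subst h
      simp [csum, lastV, gdist_self hw, walkWeight]
  | @cons u b v hadj q ih =>
    intro a l hsub
    rw [SimpleGraph.Walk.support_cons] at hsub
    have hwW : walkWeight w (SimpleGraph.Walk.cons hadj q) = w s(u, b) + walkWeight w q := by
      simp [walkWeight]
    have hub : gdist G w u b ≤ w s(u, b) := by
      have := gdist_le hw (SimpleGraph.Walk.cons hadj (SimpleGraph.Walk.nil : G.Walk b b))
      simpa [walkWeight] using this
    cases hsub with
    | cons _ h =>
      have := ih a l h
      have htri := gdist_triangle hconn hw u b a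
      rw [hwW]; linarith
    | cons_cons _ h =>
      cases l with
      | nil =>
        have hbv : gdist G w b v ≤ walkWeight w q := gdist_le hw q
        have htri := gdist_triangle hconn hw u b v
        rw [hwW]
        simp only [csum, lastV, gdist_self hw]
        linarith
      | cons c l' =>
        have := ih c l' h
        have htri := gdist_triangle hconn hw u b c
        rw [hwW]
        simp only [csum, lastV, gdist_self hw]
        linarith

end chain

section chainsum

lemma csum_ge {G : SimpleGraph V} {w : Sym2 V → ℝ} {r : ℝ} {N : Finset V}
    (hsep : ∀ u ∈ N, ∀ v ∈ N, u ≠ v → r < gdist G w u v) :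
    ∀ (a : V) (l : List V), (a :: l).Nodup → (∀ x ∈ a :: l, x ∈ N) →
    (l.length : ℝ) * r ≤ csum G w a l := by
  intro a l
  induction l generalizing a with
  | nil => simp [csum]
  | cons b l ih =>
    intro hnd hmem
    have hab : a ≠ b := by
      intro h; subst h; simp at hnd
    have h1 : r < gdist G w a b :=
      hsep a (hmem a (by simp)) b (hmem b (by simp)) hab
    have h2 := ih b (by simpa using hnd.of_cons) (fun x hx => hmem x (List.mem_cons_of_mem _ hx))
    simp only [csum, List.length_cons]
    push_cast
    linarith

end chainsum

section tour

variable {T : SimpleGraph V}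

/-- Lemma D: extract a prefix of a path ending at the first vertex in `s`. -/
lemma prefix_to_set (s : V → Prop) [DecidablePred s] :
    ∀ {x v₀ : V} (P : T.Walk x v₀), P.IsPath → s v₀ → ¬ s x →
    ∃ (y : V) (Q : T.Walk x y), Q.IsPath ∧ s y ∧ (∀ z ∈ Q.support, z ≠ y → ¬ s z) ∧
      Q.support ⊆ P.support := by
  intro x v₀ P
  induction P with
  | nil => intro _ h hx; exact absurd h hx
  | @cons x b v₀ hadj q ih =>
    intro hP hv hx
    by_cases hb : s b
    · refine ⟨b, SimpleGraph.Walk.cons hadj SimpleGraph.Walk.nil, ?_, hb, ?_, ?_⟩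
      · rw [SimpleGraph.Walk.cons_isPath_iff]
        simp [hadj.ne]
      · intro z hz hzb
        simp only [SimpleGraph.Walk.support_cons, SimpleGraph.Walk.support_nil,
          List.mem_cons, List.mem_singleton] at hz
        rcases hz with rfl | hz
        · exact hx
        · simp at hz; exact absurd hz hzb
      · intro z hz
        simp only [SimpleGraph.Walk.support_cons, SimpleGraph.Walk.support_nil,
          List.mem_cons, List.mem_singleton] at hz ⊢
        rcases hz with rfl | hz
        · exact Or.inl rfl
        · simp at hz; subst hz
          exact Or.inr (SimpleGraph.Walk.start_mem_support q)
    · obtain ⟨y, Q', hQ'path, hy, hQ's, hQ'sub⟩ := ih hP.of_cons hv hb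
      have hxq : x ∉ q.support := ((SimpleGraph.Walk.cons_isPath_iff hadj q).mp hP).2
      refine ⟨y, SimpleGraph.Walk.cons hadj Q', ?_, hy, ?_, ?_⟩
      · rw [SimpleGraph.Walk.cons_isPath_iff]
        exact ⟨hQ'path, fun h => hxq (hQ'sub h)⟩
      · intro z hz hzy
        rw [SimpleGraph.Walk.support_cons, List.mem_cons] at hz
        rcases hz with rfl | hz
        · exact hx
        · exact hQ's z hz hzy
      · intro z hz
        rw [SimpleGraph.Walk.support_cons, List.mem_cons] at hz
        rw [SimpleGraph.Walk.support_cons, List.mem_cons]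
        rcases hz with rfl | hz
        · exact Or.inl rfl
        · exact Or.inr (hQ'sub hz)

/-- Lemma E: a closed walk visiting all of `N` using each edge at most twice. -/
lemma tour_exists [DecidableEq V] (hTc : T.Connected) (v₀ : V) (N : Finset V) :
    ∃ p : T.Walk v₀ v₀, (∀ x ∈ N, x ∈ p.support) ∧ ∀ e, p.edges.count e ≤ 2 := by
  classical
  induction N using Finset.induction_on with
  | empty => exact ⟨SimpleGraph.Walk.nil, by simp, by simp⟩
  | @insert x N hxN ih =>
    obtain ⟨p, hsupp, hcount⟩ := ih
    by_cases hx : x ∈ p.support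
    · refine ⟨p, ?_, hcount⟩
      intro z hz
      rcases Finset.mem_insert.mp hz with rfl | hz
      · exact hx
      · exact hsupp z hz
    · obtain ⟨P0⟩ := hTc x v₀
      obtain ⟨y, Q, hQpath, hy, hQs, _⟩ :=
        prefix_to_set (· ∈ p.support) P0.toPath.1 P0.toPath.2 p.start_mem_support hx
      set t := p.takeUntil y hy with ht
      set d := p.dropUntil y hy with hd
      refine ⟨t.append ((Q.reverse.append Q).append d), ?_, ?_⟩
      · intro z hz
        rcases Finset.mem_insert.mp hz with rfl | hz
        · rw [SimpleGraph.Walk.mem_support_append_iff]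
          right
          rw [SimpleGraph.Walk.mem_support_append_iff, SimpleGraph.Walk.mem_support_append_iff]
          exact Or.inl (Or.inr Q.start_mem_support)
        · have hzp : z ∈ (t.append d).support := by
            rw [ht, hd, SimpleGraph.Walk.take_spec]
            exact hsupp z hz
          rw [SimpleGraph.Walk.mem_support_append_iff] at hzp
          rw [SimpleGraph.Walk.mem_support_append_iff]
          rcases hzp with h | h
          · exact Or.inl h
          · right
            rw [SimpleGraph.Walk.mem_support_append_iff]
            exact Or.inr h
      · intro e
        have hpe : p.edges = t.edges ++ d.edges := by
          conv_lhs => rw [← SimpleGraph.Walk.take_spec p hy]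
          rw [SimpleGraph.Walk.edges_append]
        have hcnt : p.edges.count e = t.edges.count e + d.edges.count e := by
          rw [hpe, List.count_append]
        have hbig : (t.append ((Q.reverse.append Q).append d)).edges.count e
            = t.edges.count e + (Q.edges.count e + Q.edges.count e + d.edges.count e) := by
          simp [SimpleGraph.Walk.edges_append, List.count_append,
            SimpleGraph.Walk.edges_reverse, List.count_reverse]
          ring
        rw [hbig]
        by_cases heQ : e ∈ Q.edges
        · have h1 : Q.edges.count e = 1 :=
            List.count_eq_one_of_mem hQpath.isTrail.edges_nodup heQ
          have h0 : e ∉ p.edges := by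
            intro hep
            induction e using Sym2.ind with
            | _ c d' =>
              have hcd : c ≠ d' := (T.mem_edgeSet.mp (Q.edges_subset_edgeSet heQ)).ne
              by_cases hcy : c = y
              · subst hcy
                exact hQs d' (Q.snd_mem_support_of_mem_edges heQ)
                  (fun h => hcd h.symm) (p.snd_mem_support_of_mem_edges hep)
              · exact hQs c (Q.fst_mem_support_of_mem_edges heQ) hcy
                  (p.fst_mem_support_of_mem_edges hep)
          have h0' : p.edges.count e = 0 := List.count_eq_zero.mpr h0
          rw [hcnt] at h0'
          omega
        · have h1 : Q.edges.count e = 0 := List.count_eq_zero.mpr heQ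
          have := hcount e
          rw [hcnt] at this
          omega

end tour


end aux

/-- if a connected weighted graph on at least two vertices has a spanning
tree of total weight `L`, then every `r`-separated set `N` (pairwise shortest-path
distances greater than `r`) has at most `⌈2L/r⌉` points. -/
theorem separated_set_card_le {V : Type*} [Fintype V] (G : SimpleGraph V)
    (w : Sym2 V → ℝ) (hcard : 2 ≤ Fintype.card V) (hconn : G.Connected)
    (hpos : ∀ e ∈ G.edgeSet, 0 < w e)
    (T : SimpleGraph V) (hTG : T ≤ G) (hT : T.IsTree)
    (L : ℝ) (hL : graphWeight T w = L) (r : ℝ) (hr : 0 < r)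
    (N : Finset V) (hsep : ∀ u ∈ N, ∀ v ∈ N, u ≠ v → r < gdist G w u v) :
    N.card ≤ ⌈2 * L / r⌉₊ := by
  classical
  have hw0 : ∀ e ∈ G.edgeSet, 0 ≤ w e := fun e he => (hpos e he).le
  have hTc : T.Connected := hT.isConnected
  have hnV : Nonempty V := Fintype.card_pos_iff.mp (by omega)
  have hTsub : T.edgeSet ⊆ G.edgeSet := SimpleGraph.edgeSet_subset_edgeSet.mpr hTG
  -- L is positive
  have hLpos : 0 < L := by
    obtain ⟨u, v, huv⟩ := Fintype.exists_pair_of_one_lt_card (α := V) (by omega)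
    obtain ⟨q⟩ := hTc u v
    have hne : T.edgeSet.toFinite.toFinset.Nonempty := by
      cases q with
      | nil => exact absurd rfl huv
      | cons hadj q' =>
        exact ⟨_, (T.edgeSet.toFinite.mem_toFinset).mpr (T.mem_edgeSet.mpr hadj)⟩
    rw [← hL, graphWeight]
    apply Finset.sum_pos _ hne
    intro e he
    exact hpos e (hTsub ((T.edgeSet.toFinite.mem_toFinset).mp he))
  have hceil1 : 0 < 2 * L / r := by positivity
  -- the tour
  obtain ⟨v₀⟩ := hnV
  obtain ⟨p, hsupp, hcount⟩ := tour_exists hTc v₀ N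
  -- weight of the tour is at most 2L
  have hWp : walkWeight w p ≤ 2 * L := by
    have h1 : walkWeight w p = ∑ e ∈ p.edges.toFinset, p.edges.count e • w e :=
      Finset.sum_list_map_count p.edges w
    have h2 : ∑ e ∈ p.edges.toFinset, p.edges.count e • w e
        ≤ ∑ e ∈ p.edges.toFinset, 2 * w e := by
      apply Finset.sum_le_sum
      intro e he
      rw [nsmul_eq_mul]
      have hwe : 0 ≤ w e :=
        hw0 e (hTsub (p.edges_subset_edgeSet (List.mem_toFinset.mp he)))
      have : (p.edges.count e : ℝ) ≤ 2 := by exact_mod_cast hcount e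
      nlinarith
    have h3 : ∑ e ∈ p.edges.toFinset, 2 * w e
        ≤ ∑ e ∈ T.edgeSet.toFinite.toFinset, 2 * w e := by
      apply Finset.sum_le_sum_of_subset_of_nonneg
      · intro e he
        exact (T.edgeSet.toFinite.mem_toFinset).mpr
          (p.edges_subset_edgeSet (List.mem_toFinset.mp he))
      · intro e he _
        have := hw0 e (hTsub ((T.edgeSet.toFinite.mem_toFinset).mp he))
        linarith
    have h4 : ∑ e ∈ T.edgeSet.toFinite.toFinset, 2 * w e = 2 * L := by
      rw [← hL, graphWeight, Finset.mul_sum]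
    rw [h1]
    linarith
  -- transfer the tour to G
  set pG : G.Walk v₀ v₀ := p.mapLe hTG with hpG
  have hid : ⇑(SimpleGraph.Hom.ofLE hTG) = id := rfl
  have hsupG : pG.support = p.support := by
    rw [hpG, SimpleGraph.Walk.support_map, hid, List.map_id]
  have hedgG : pG.edges = p.edges := by
    rw [hpG, SimpleGraph.Walk.edges_map, hid, Sym2.map_id, List.map_id]
  have hWG : walkWeight w pG = walkWeight w p := by
    rw [walkWeight, walkWeight, hedgG]
  -- the list of N-vertices in tour order
  set l0 : List V := p.support.dedup.filter (· ∈ N) with hl0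
  have hnd : l0.Nodup := (p.support.nodup_dedup).filter _
  have htoF : ∀ z, z ∈ l0 ↔ z ∈ N := by
    intro z
    simp only [hl0, List.mem_filter, List.mem_dedup, decide_eq_true_eq]
    constructor
    · exact fun h => h.2
    · exact fun h => ⟨hsupp z h, h⟩
  have hcardN : N.card = l0.length := by
    rw [← List.toFinset_card_of_nodup hnd]
    congr 1
    ext z
    rw [List.mem_toFinset, htoF]
  have hsubl : List.Sublist l0 pG.support := by
    rw [hsupG]
    exact List.filter_sublist.trans (List.dedup_sublist _)
  cases hl : l0 with
  | nil =>
    rw [hcardN, hl]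
    simp
  | cons a l1 =>
    cases l1 with
    | nil =>
      rw [hcardN, hl]
      simpa using Nat.ceil_pos.mpr hceil1
    | cons c l' =>
      rw [hl] at hsubl hnd htoF hcardN
      have hB := chain_le_walkWeight hconn hw0 pG a (c :: l') hsubl
      have hmemN : ∀ x ∈ a :: c :: l', x ∈ N := fun x hx => (htoF x).mp hx
      have hcs := csum_ge hsep a (c :: l') hnd hmemN
      have hlast_mem : lastV a (c :: l') ∈ c :: l' := lastV_mem a (c :: l') (by simp)
      have hlast_ne : lastV a (c :: l') ≠ a := by
        intro h
        have : a ∈ c :: l' := h ▸ hlast_mem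
        exact (List.nodup_cons.mp hnd).1 this
      have hla : r < gdist G w (lastV a (c :: l')) a :=
        hsep _ (hmemN _ (List.mem_cons_of_mem _ hlast_mem)) a (hmemN a (by simp)) hlast_ne
      have htri := gdist_triangle hconn hw0 (lastV a (c :: l')) v₀ a
      have hlen : ((a :: c :: l').length : ℝ) * r ≤ 2 * L := by
        simp only [lastV] at htri hla hB
        have h5 : gdist G w (lastV c l') a + csum G w a (c :: l') ≤ walkWeight w pG := by
          linarith
        simp only [List.length_cons] at *
        push_cast
        push_cast at hcs
        linarith [hWG, hWp]
      have hfin : ((a :: c :: l').length : ℝ) ≤ 2 * L / r := by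
        rw [le_div_iff₀ hr]
        exact hlen
      have : ((a :: c :: l').length : ℝ) ≤ (⌈2 * L / r⌉₊ : ℝ) :=
        le_trans hfin (Nat.le_ceil _)
      rw [hcardN]
      exact_mod_cast this
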